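/- In g = sl_2(ℂ) with standard triple e = E_{12}, h = diag(1,−1), f = E_{21}, the map N × (f + g^e) → f + b, (n, ξ) ↦ n ξ n^{-1}, where N is the group of upper unitriangular matrices, b the upper triangular traceless matrices, and g^e = span{e}, is a bijection onto f + b. -/
import Mathlib


lemma nt_inv (t : ℂ) : (!![1, t; 0, 1])⁻¹ = !![1, -t; 0, 1] :=
  Matrix.inv_eq_right_inv (by
    ext i j
    fin_cases i <;> fin_cases j <;>
      simp [Matrix.mul_apply, Fin.sum_univ_two])

lemma conj_eq (t c : ℂ) :
    !![1, t; 0, 1] * (!![0, 0; 1, 0] + c • !![0, 1; 0, 0]) * (!![1, t; 0, 1])⁻¹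
      = !![t, c - t ^ 2; 1, -t] := by
  rw [nt_inv]
  ext i j
  fin_cases i <;> fin_cases j <;>
    simp [Matrix.mul_apply, Fin.sum_univ_two] <;> ring

/-- In `sl₂(ℂ)` with `e = [[0,1],[0,0]]`, `f = [[0,0],[1,0]]`, the map
`N × (f + g^e) → f + b`, `(n, ξ) ↦ n ξ n⁻¹`, is a bijection: for every traceless `X` with
`X 1 0 = 1` (i.e. `X ∈ f + b`) there exist unique `t, c ∈ ℂ` with
`n_t (f + c e) n_t⁻¹ = X`, where `n_t = [[1,t],[0,1]]`. -/
theorem stmt6 (X : Matrix (Fin 2) (Fin 2) ℂ) (htr : X.trace = 0) (h10 : X 1 0 = 1) :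
    ∃! tc : ℂ × ℂ,
      !![1, tc.1; 0, 1] * (!![0, 0; 1, 0] + tc.2 • !![0, 1; 0, 0]) * (!![1, tc.1; 0, 1])⁻¹
        = X := by
  have h11 : X 1 1 = -X 0 0 := by
    have := htr
    rw [Matrix.trace_fin_two] at this
    linear_combination this
  refine ⟨(X 0 0, X 0 1 + (X 0 0) ^ 2), ?_, ?_⟩
  · simp only [conj_eq]
    ext i j
    fin_cases i <;> fin_cases j <;> simp [h10, h11] <;> ring
  · rintro ⟨t, c⟩ hX
    rw [conj_eq] at hX
    have h00 : t = X 0 0 := by rw [← hX]; simp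
    have h01 : c - t ^ 2 = X 0 1 := by rw [← hX]; simp
    simp only [Prod.mk.injEq]
    constructor
    · exact h00
    · rw [← h01, ← h00]; ring
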